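/- arXiv:2404.15205 — 2 statements merged into one kernel-verified Lean document; each statement's English description precedes it below -/
import Mathlib

section
/- Let μ = Σ_{i=1}^N α_i e^{−U_i} for some N ≥ 1, weights α_i > 0, and potentials U_i ∈ C²(ℝ^d) with e^{−U_i} ∈ L¹(ℝ^d), and assume ∇²U_i(x) ≽ K·I_d for all i and all x, for some K > 0. Then at every x ∈ ℝ^d, −∇² log μ(x) ≽ K·I_d − Σ_{i>j} (∇U_i(x) − ∇U_j(x))^{⊗2} / ( 2 + (α_i/α_j) e^{U_j(x)−U_i(x)} + (α_j/α_i) e^{U_i(x)−U_j(x)} ). -/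
noncomputable section
open Real MeasureTheory
open scoped RealInnerProductSpace

/-! With the posterior weights `p_i = α_i e^{-U_i(x)} / μ(x)`, differentiating `log μ` twice gives
`-∇² log μ = Σ_i p_i ∇²U_i - Cov_p(∇U_i)`: a `p`-average of Hessians, each `≽ K I_d`, minus the
covariance of the component gradients under `p`. That covariance is
`Σ_{i>j} p_i p_j (∇U_i - ∇U_j)^{⊗2}`, and since `p_i / p_j = (α_i/α_j) e^{U_j - U_i}`,
`p_i p_j (2 + p_i/p_j + p_j/p_i) = (p_i + p_j)² ≤ 1`. -/

open Finset Filter Topology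

theorem sum_eq_two_nsmul_sum_filter_lt {ι M : Type*} [Fintype ι] [LinearOrder ι] [AddCommMonoid M]
    (f : ι × ι → M) (hsymm : ∀ i j, f (i, j) = f (j, i)) (hdiag : ∀ i, f (i, i) = 0) :
    ∑ q, f q = 2 • ∑ q ∈ univ.filter (fun q : ι × ι => q.2 < q.1), f q := by
  have hsplit : ∀ q : ι × ι,
      f q = (if q.2 < q.1 then f q else 0) + (if q.1 < q.2 then f q else 0) := by
    rintro ⟨i, j⟩
    rcases lt_trichotomy i j with h | rfl | h
    · simp [h, h.not_gt]
    · simp [hdiag]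
    · simp [h, h.not_gt]
  have hswap : ∑ q : ι × ι, (if q.1 < q.2 then f q else 0)
      = ∑ q : ι × ι, (if q.2 < q.1 then f q else 0) :=
    Fintype.sum_equiv (Equiv.prodComm ι ι) _ _ fun q => by
      simp only [Equiv.prodComm_apply, Prod.fst_swap, Prod.snd_swap]
      exact if_congr Iff.rfl (hsymm q.1 q.2) rfl
  rw [Finset.sum_congr rfl fun q _ => hsplit q, sum_add_distrib, hswap, two_nsmul, sum_filter]

theorem sum_mul_sq_sub_sq_sum_eq_sum_filter_lt {ι : Type*} [Fintype ι] [LinearOrder ι]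
    (p c : ι → ℝ) (hp : ∑ i, p i = 1) :
    ∑ i, p i * c i ^ 2 - (∑ i, p i * c i) ^ 2
      = ∑ q ∈ univ.filter (fun q : ι × ι => q.2 < q.1), p q.1 * p q.2 * (c q.1 - c q.2) ^ 2 := by
  have hfull : ∑ q : ι × ι, p q.1 * p q.2 * (c q.1 - c q.2) ^ 2
      = 2 * (∑ i, p i * c i ^ 2 - (∑ i, p i * c i) ^ 2) := by
    have hexp : ∀ i j, p i * p j * (c i - c j) ^ 2
        = p i * c i ^ 2 * p j + p i * (p j * c j ^ 2) - 2 * (p i * c i) * (p j * c j) :=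
      fun i j => by ring
    simp only [Fintype.sum_prod_type, hexp, sum_add_distrib, sum_sub_distrib, ← mul_sum, ← sum_mul,
      hp]
    ring
  rw [sum_eq_two_nsmul_sum_filter_lt _ (fun i j => by ring) (fun i => by ring), two_nsmul] at hfull
  linarith

theorem mul_le_inv_two_add_div_add_div {p q : ℝ} (hp : 0 < p) (hq : 0 < q) (hpq : p + q ≤ 1) :
    p * q ≤ (2 + p / q + q / p)⁻¹ := by
  have hsq : 2 + p / q + q / p = (p + q) ^ 2 / (p * q) := by
    field_simp
    ring
  rw [hsq, inv_div, le_div_iff₀ (by positivity)]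
  nlinarith [mul_pos hp hq, mul_le_mul_of_nonneg_left hpq (mul_pos hp hq).le]

section MixtureWeight

variable {ι E : Type*} [Fintype ι] {a : ι → ℝ} {U : ι → E → ℝ} {x : E}

def mixtureWeight (a : ι → ℝ) (U : ι → E → ℝ) (x : E) (i : ι) : ℝ :=
  a i * exp (-U i x) / ∑ j, a j * exp (-U j x)

variable [Nonempty ι]

theorem sum_mul_exp_neg_pos (ha : ∀ i, 0 < a i) : 0 < ∑ i, a i * exp (-U i x) :=
  sum_pos (fun i _ => mul_pos (ha i) (exp_pos _)) univ_nonempty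

theorem mixtureWeight_pos (ha : ∀ i, 0 < a i) (i : ι) : 0 < mixtureWeight a U x i :=
  div_pos (mul_pos (ha i) (exp_pos _)) (sum_mul_exp_neg_pos ha)

theorem sum_mixtureWeight (ha : ∀ i, 0 < a i) : ∑ i, mixtureWeight a U x i = 1 := by
  simp only [mixtureWeight]
  rw [← sum_div, div_self (sum_mul_exp_neg_pos ha).ne']

theorem mixtureWeight_div_mixtureWeight (ha : ∀ i, 0 < a i) (i j : ι) :
    mixtureWeight a U x i / mixtureWeight a U x j = a i / a j * exp (U j x - U i x) := by
  have hμ := (sum_mul_exp_neg_pos (U := U) (x := x) ha).ne'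
  have hj := (ha j).ne'
  rw [mixtureWeight, mixtureWeight, div_div_div_cancel_right₀ hμ, exp_sub, exp_neg, exp_neg]
  field_simp

theorem mixtureWeight_add_mixtureWeight_le_one (ha : ∀ i, 0 < a i) {i j : ι} (hij : i ≠ j) :
    mixtureWeight a U x i + mixtureWeight a U x j ≤ 1 := by
  classical
  rw [← sum_mixtureWeight (U := U) (x := x) ha, ← sum_pair hij]
  exact sum_le_univ_sum_of_nonneg fun k => (mixtureWeight_pos ha k).le

end MixtureWeight

section Calculus

variable {E : Type*} [NormedAddCommGroup E] [NormedSpace ℝ E]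

theorem iteratedFDeriv_two_apply_eq_fderiv_fderiv_apply {h : E → ℝ} {x : E}
    (hh : DifferentiableAt ℝ (fderiv ℝ h) x) (v w : E) :
    iteratedFDeriv ℝ 2 h x ![v, w] = fderiv ℝ (fun y => fderiv ℝ h y w) x v := by
  rw [iteratedFDeriv_two_apply, fderiv_clm_apply hh (differentiableAt_const w)]
  simp

theorem iteratedFDeriv_two_comp_apply {g g' : ℝ → ℝ} {g'' : ℝ} {f : E → ℝ} {x : E}
    (hg : ∀ᶠ t in 𝓝 (f x), HasDerivAt g (g' t) t) (hg' : HasDerivAt g' g'' (f x))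
    (hf : ContDiffAt ℝ 2 f x) (v w : E) :
    iteratedFDeriv ℝ 2 (g ∘ f) x ![v, w]
      = g'' * fderiv ℝ f x v * fderiv ℝ f x w + g' (f x) * iteratedFDeriv ℝ 2 f x ![v, w] := by
  have hf_near : ∀ᶠ y in 𝓝 x, DifferentiableAt ℝ f y :=
    (hf.eventually (by simp)).mono fun y hy => hy.differentiableAt (by simp)
  have hf_at : DifferentiableAt ℝ f x := hf.differentiableAt (by simp)
  have hfderiv : DifferentiableAt ℝ (fderiv ℝ f) x :=
    (hf.fderiv_right (m := 1) le_rfl).differentiableAt one_ne_zero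
  have hfderiv_w : DifferentiableAt ℝ (fun y => fderiv ℝ f y w) x :=
    hfderiv.clm_apply (differentiableAt_const w)
  have hchain : fderiv ℝ (g ∘ f) =ᶠ[𝓝 x] fun y => g' (f y) • fderiv ℝ f y := by
    filter_upwards [hf_near, hf_at.continuousAt.eventually hg] with y hy hgy
    exact (hgy.comp_hasFDerivAt y hy.hasFDerivAt).fderiv
  have hchain_w : (fun y => fderiv ℝ (g ∘ f) y w) =ᶠ[𝓝 x] fun y => g' (f y) * fderiv ℝ f y w :=
    hchain.mono fun y hy => by simp [hy]
  have hprod : HasFDerivAt (fun y => g' (f y) * fderiv ℝ f y w)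
      (g' (f x) • fderiv ℝ (fun y => fderiv ℝ f y w) x + fderiv ℝ f x w • g'' • fderiv ℝ f x) x :=
    (hg'.comp_hasFDerivAt x hf_at.hasFDerivAt).fun_mul hfderiv_w.hasFDerivAt
  rw [iteratedFDeriv_two_apply_eq_fderiv_fderiv_apply
      (hchain.differentiableAt_iff.2 ((hg'.differentiableAt.comp x hf_at).smul hfderiv)),
    iteratedFDeriv_two_apply_eq_fderiv_fderiv_apply hfderiv, hchain_w.fderiv_eq, hprod.fderiv]
  simp only [add_apply, smul_apply, smul_eq_mul]
  ring

theorem hasDerivAt_const_mul_exp_neg (a t : ℝ) :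
    HasDerivAt (fun s => a * exp (-s)) (-(a * exp (-t))) t := by
  simpa using ((hasDerivAt_neg t).exp.const_mul a)

end Calculus

section Mixture

variable {ι E : Type*} [Fintype ι] [NormedAddCommGroup E] [NormedSpace ℝ E]
  {a : ι → ℝ} {U : ι → E → ℝ} {x : E}

theorem fderiv_sum_mul_exp_neg_apply (hU : ∀ i, DifferentiableAt ℝ (U i) x) (w : E) :
    fderiv ℝ (fun y => ∑ i, a i * exp (-U i y)) x w
      = -∑ i, a i * exp (-U i x) * fderiv ℝ (U i) x w := by
  have h : HasFDerivAt (fun y => ∑ i, a i * exp (-U i y))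
      (∑ i, -(a i * exp (-U i x)) • fderiv ℝ (U i) x) x := HasFDerivAt.fun_sum fun i _ =>
    (hasDerivAt_const_mul_exp_neg (a i) (U i x)).comp_hasFDerivAt x (hU i).hasFDerivAt
  rw [h.fderiv]
  simp [sum_neg_distrib, mul_assoc]

theorem iteratedFDeriv_two_sum_mul_exp_neg_apply (hU : ∀ i, ContDiffAt ℝ 2 (U i) x) (v w : E) :
    iteratedFDeriv ℝ 2 (fun y => ∑ i, a i * exp (-U i y)) x ![v, w]
      = ∑ i, a i * exp (-U i x) *
          (fderiv ℝ (U i) x v * fderiv ℝ (U i) x w - iteratedFDeriv ℝ 2 (U i) x ![v, w]) := by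
  rw [iteratedFDeriv_fun_sum_apply (u := univ) fun i _ => contDiffAt_const.mul (hU i).neg.exp,
    _root_.sum_apply]
  refine sum_congr rfl fun i _ => ?_
  have hderiv : HasDerivAt (fun s => -(a i * exp (-s))) (a i * exp (-U i x)) (U i x) := by
    simpa using (hasDerivAt_const_mul_exp_neg (a i) (U i x)).fun_neg
  rw [show (fun y => a i * exp (-U i y)) = (fun s => a i * exp (-s)) ∘ U i from rfl,
    iteratedFDeriv_two_comp_apply (Eventually.of_forall (hasDerivAt_const_mul_exp_neg (a i)))
      hderiv (hU i)]
  ring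

theorem neg_iteratedFDeriv_two_log_sum_mul_exp_neg [Nonempty ι] (ha : ∀ i, 0 < a i)
    (hU : ∀ i, ContDiffAt ℝ 2 (U i) x) (w : E) :
    -iteratedFDeriv ℝ 2 (fun y => log (∑ i, a i * exp (-U i y))) x ![w, w]
      = ∑ i, mixtureWeight a U x i * iteratedFDeriv ℝ 2 (U i) x ![w, w]
        - (∑ i, mixtureWeight a U x i * fderiv ℝ (U i) x w ^ 2
          - (∑ i, mixtureWeight a U x i * fderiv ℝ (U i) x w) ^ 2) := by
  set μ : E → ℝ := fun y => ∑ i, a i * exp (-U i y)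
  have hμ : 0 < μ x := sum_mul_exp_neg_pos ha
  have hμC : ContDiffAt ℝ 2 μ x := ContDiffAt.sum fun i _ => contDiffAt_const.mul (hU i).neg.exp
  have hlog : ∀ᶠ t in 𝓝 (μ x), HasDerivAt log t⁻¹ t :=
    (eventually_ne_nhds hμ.ne').mono fun t ht => hasDerivAt_log ht
  rw [show (fun y => log (μ y)) = log ∘ μ from rfl,
    iteratedFDeriv_two_comp_apply hlog (hasDerivAt_inv hμ.ne') hμC,
    fderiv_sum_mul_exp_neg_apply fun i => (hU i).differentiableAt (by simp),
    iteratedFDeriv_two_sum_mul_exp_neg_apply hU]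
  have hμ' : ∑ i, a i * exp (-U i x) ≠ 0 := hμ.ne'
  simp only [μ, mixtureWeight, div_mul_eq_mul_div, ← sum_div, mul_sub, sum_sub_distrib]
  field_simp
  ring

end Mixture

theorem mixture_log_hessian_lower_bound_crude_general
    (d N : ℕ) (hN : 1 ≤ N)
    (a : Fin N → ℝ) (ha : ∀ i, 0 < a i)
    (U : Fin N → EuclideanSpace ℝ (Fin d) → ℝ)
    (hU : ∀ i, ContDiff ℝ 2 (U i))
    (K : ℝ)
    (hHess : ∀ i (x w : EuclideanSpace ℝ (Fin d)),
      K * ‖w‖ ^ 2 ≤ iteratedFDeriv ℝ 2 (U i) x ![w, w])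
    (μ : EuclideanSpace ℝ (Fin d) → ℝ)
    (hμ : ∀ x, μ x = ∑ i, a i * Real.exp (-(U i x)))
    (x w : EuclideanSpace ℝ (Fin d)) :
    K * ‖w‖ ^ 2 -
        ∑ p ∈ Finset.univ.filter (fun p : Fin N × Fin N => p.2 < p.1),
          ⟪gradient (U p.1) x - gradient (U p.2) x, w⟫ ^ 2 /
            (2 + a p.1 / a p.2 * Real.exp (U p.2 x - U p.1 x)
               + a p.2 / a p.1 * Real.exp (U p.1 x - U p.2 x))
      ≤ -(iteratedFDeriv ℝ 2 (fun y => Real.log (μ y)) x ![w, w]) := by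
  have : Nonempty (Fin N) := ⟨⟨0, hN⟩⟩
  set p := mixtureWeight a U x
  rw [show μ = fun y => ∑ i, a i * exp (-U i y) from funext hμ,
    neg_iteratedFDeriv_two_log_sum_mul_exp_neg ha fun i => (hU i).contDiffAt,
    sum_mul_sq_sub_sq_sum_eq_sum_filter_lt p _ (sum_mixtureWeight ha)]
  refine sub_le_sub ?_ (sum_le_sum fun q hq => ?_)
  · calc K * ‖w‖ ^ 2 = ∑ i, p i * (K * ‖w‖ ^ 2) := by rw [← sum_mul, sum_mixtureWeight ha, one_mul]
      _ ≤ _ := sum_le_sum fun i _ =>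
          mul_le_mul_of_nonneg_left (hHess i x w) (mixtureWeight_pos ha i).le
  · have hne : q.1 ≠ q.2 := (mem_filter.1 hq).2.ne'
    rw [inner_sub_left, inner_gradient_left, inner_gradient_left,
      ← mixtureWeight_div_mixtureWeight ha, ← mixtureWeight_div_mixtureWeight ha,
      div_eq_mul_inv, mul_comm _ (_ ^ 2)]
    exact mul_le_mul_of_nonneg_left (mul_le_inv_two_add_div_add_div (mixtureWeight_pos ha _)
      (mixtureWeight_pos ha _) (mixtureWeight_add_mixtureWeight_le_one ha hne)) (sq_nonneg _)

/-- **Proposition 8, second bound.** For a mixture `μ = Σ_i α_i e^{-U_i}` of strongly log-concave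
components with `∇² U_i ≽ K I_d`, the log-Hessian satisfies
`-∇² log μ ≽ K I_d - Σ_{i>j} (∇U_i - ∇U_j)^{⊗2} / (2 + (α_i/α_j)e^{U_j-U_i} + (α_j/α_i)e^{U_i-U_j})`
(as quadratic forms, evaluated at any direction `w`). -/
theorem mixture_log_hessian_lower_bound_crude
    (d N : ℕ) (hN : 1 ≤ N)
    (a : Fin N → ℝ) (ha : ∀ i, 0 < a i)
    (U : Fin N → EuclideanSpace ℝ (Fin d) → ℝ)
    (hU : ∀ i, ContDiff ℝ 2 (U i))
    (hInt : ∀ i, Integrable (fun x => Real.exp (-(U i x))))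
    (K : ℝ) (hK : 0 < K)
    (hHess : ∀ i (x w : EuclideanSpace ℝ (Fin d)),
      K * ‖w‖ ^ 2 ≤ iteratedFDeriv ℝ 2 (U i) x ![w, w])
    (μ : EuclideanSpace ℝ (Fin d) → ℝ)
    (hμ : ∀ x, μ x = ∑ i, a i * Real.exp (-(U i x)))
    (x w : EuclideanSpace ℝ (Fin d)) :
    K * ‖w‖ ^ 2 -
        ∑ p ∈ Finset.univ.filter (fun p : Fin N × Fin N => p.2 < p.1),
          ⟪gradient (U p.1) x - gradient (U p.2) x, w⟫ ^ 2 /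
            (2 + a p.1 / a p.2 * Real.exp (U p.2 x - U p.1 x)
               + a p.2 / a p.1 * Real.exp (U p.1 x - U p.2 x))
      ≤ -(iteratedFDeriv ℝ 2 (fun y => Real.log (μ y)) x ![w, w]) :=
  mixture_log_hessian_lower_bound_crude_general d N hN a ha U hU K hHess μ hμ x w
end
end

section
/- Fix x₀ > 0, t > 0, and α, β > 0, and let μ = (α/(α+β)) δ₀ + (β/(α+β)) δ_{x₀}. There exists z̄ ∈ ℝ with α e^{−z̄²/(2t)} = β e^{−(z̄−x₀)²/(2t)}, and at any such point, −(d²/dz²) log(μ*γ_t)(z̄) = (1/t)·(1 − x₀²/(4t)). In particular, if t < x₀²/4 then μ*γ_t is not log-concave. -/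
noncomputable section
open Real MeasureTheory

/-- Centered Gaussian density on `ℝ` with variance `t`. -/
def gaussDensity1 (t x : ℝ) : ℝ :=
  (2 * π * t) ^ (-(1 : ℝ) / 2) * Real.exp (-x ^ 2 / (2 * t))

/-- The density of `μ * γ_t` for the two-point mixture
`μ = (α/(α+β)) δ₀ + (β/(α+β)) δ_{x₀}`. -/
def twoPointHeat (α β x₀ t z : ℝ) : ℝ :=
  α / (α + β) * gaussDensity1 t z + β / (α + β) * gaussDensity1 t (z - x₀)

/-!
Write the density as `f = u + v`, the two weighted Gaussian bumps, so that `u' = p u`, `v' = q v`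
with `p = -z/t`, `q = -(z - x₀)/t`. Then `f'' f - f'² = -f²/t + (p - q)² u v`, i.e.
`(log f)'' = -1/t + (x₀/t)² · u v / (u + v)²`. At a balanced point `u = v`, so
`(log f)'' = -1/t + x₀²/(4t²)`, which is positive as soon as `t < x₀²/4`.
-/

theorem deriv_deriv_log_of_hasDerivAt {f f' : ℝ → ℝ} {f'' z : ℝ}
    (hf : ∀ y, HasDerivAt f (f' y) y) (hf' : HasDerivAt f' f'' z) (hf₀ : ∀ y, f y ≠ 0) :
    deriv (deriv fun y => log (f y)) z = (f'' * f z - f' z * f' z) / f z ^ 2 := by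
  have hlog : deriv (fun y => log (f y)) = fun y => f' y / f y :=
    funext fun y => ((hf y).log (hf₀ y)).deriv
  rw [hlog]
  exact (hf'.div (hf z) (hf₀ z)).deriv

theorem gaussDensity1_pos {t : ℝ} (ht : 0 < t) (x : ℝ) : 0 < gaussDensity1 t x := by
  unfold gaussDensity1
  positivity

theorem hasDerivAt_gaussDensity1 (t x : ℝ) :
    HasDerivAt (gaussDensity1 t) (-x / t * gaussDensity1 t x) x := by
  have hexp : HasDerivAt (fun y : ℝ => -y ^ 2 / (2 * t)) (-x / t) x :=
    ((hasDerivAt_pow 2 x).neg.div_const (2 * t)).congr_deriv (by ring)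
  unfold gaussDensity1
  exact (hexp.exp.const_mul _).congr_deriv (by ring)

theorem hasDerivAt_deriv_gaussDensity1 (t x : ℝ) :
    HasDerivAt (fun y => -y / t * gaussDensity1 t y)
      ((x ^ 2 / t ^ 2 - 1 / t) * gaussDensity1 t x) x :=
  (((hasDerivAt_id' x).fun_neg.div_const t).mul (hasDerivAt_gaussDensity1 t x)).congr_deriv
    (by ring)

theorem twoPointHeat_pos {α β t : ℝ} (hα : 0 < α) (hβ : 0 < β) (ht : 0 < t) (x₀ z : ℝ) :
    0 < twoPointHeat α β x₀ t z := by
  have hg₀ := gaussDensity1_pos ht z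
  have hg₁ := gaussDensity1_pos ht (z - x₀)
  unfold twoPointHeat
  positivity

theorem hasDerivAt_twoPointHeat (α β x₀ t z : ℝ) :
    HasDerivAt (twoPointHeat α β x₀ t)
      (-z / t * (α / (α + β) * gaussDensity1 t z)
        + -(z - x₀) / t * (β / (α + β) * gaussDensity1 t (z - x₀))) z := by
  have h₀ := (hasDerivAt_gaussDensity1 t z).const_mul (α / (α + β))
  have h₁ := ((hasDerivAt_gaussDensity1 t (z - x₀)).comp_sub_const z x₀).const_mul (β / (α + β))
  exact (h₀.add h₁).congr_deriv (by ring)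

theorem hasDerivAt_deriv_twoPointHeat (α β x₀ t z : ℝ) :
    HasDerivAt (fun y => -y / t * (α / (α + β) * gaussDensity1 t y)
        + -(y - x₀) / t * (β / (α + β) * gaussDensity1 t (y - x₀)))
      ((z ^ 2 / t ^ 2 - 1 / t) * (α / (α + β) * gaussDensity1 t z)
        + ((z - x₀) ^ 2 / t ^ 2 - 1 / t) * (β / (α + β) * gaussDensity1 t (z - x₀))) z := by
  have h₀ := (hasDerivAt_deriv_gaussDensity1 t z).const_mul (α / (α + β))
  have h₁ :=
    ((hasDerivAt_deriv_gaussDensity1 t (z - x₀)).comp_sub_const z x₀).const_mul (β / (α + β))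
  exact ((h₀.fun_add h₁).congr_deriv (by ring)).congr_of_eventuallyEq
    (.of_forall fun y => by ring)

theorem weighted_gaussDensity1_eq_of_balanced {α β x₀ t z : ℝ}
    (hbal : α * exp (-z ^ 2 / (2 * t)) = β * exp (-(z - x₀) ^ 2 / (2 * t))) :
    β / (α + β) * gaussDensity1 t (z - x₀) = α / (α + β) * gaussDensity1 t z := by
  unfold gaussDensity1
  linear_combination -(2 * π * t) ^ (-(1 : ℝ) / 2) / (α + β) * hbal

theorem neg_deriv_deriv_log_twoPointHeat_of_balanced {α β x₀ t z : ℝ} (hα : 0 < α) (hβ : 0 < β)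
    (ht : 0 < t) (hbal : α * exp (-z ^ 2 / (2 * t)) = β * exp (-(z - x₀) ^ 2 / (2 * t))) :
    -deriv (deriv fun y => log (twoPointHeat α β x₀ t y)) z = 1 / t * (1 - x₀ ^ 2 / (4 * t)) := by
  rw [deriv_deriv_log_of_hasDerivAt (hasDerivAt_twoPointHeat α β x₀ t)
    (hasDerivAt_deriv_twoPointHeat α β x₀ t z) fun y => (twoPointHeat_pos hα hβ ht x₀ y).ne',
    twoPointHeat, weighted_gaussDensity1_eq_of_balanced hbal]
  have hg := gaussDensity1_pos ht z
  have hαβ : 0 < α + β := by positivity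
  field_simp
  ring

theorem exists_balanced_point {α β x₀ t : ℝ} (hα : 0 < α) (hβ : 0 < β) (hx₀ : x₀ ≠ 0)
    (ht : t ≠ 0) : ∃ z, α * exp (-z ^ 2 / (2 * t)) = β * exp (-(z - x₀) ^ 2 / (2 * t)) := by
  set z := x₀ / 2 + t / x₀ * log (α / β) with hz
  have hexponents : log α + -z ^ 2 / (2 * t) = log β + -(z - x₀) ^ 2 / (2 * t) := by
    rw [hz, log_div hα.ne' hβ.ne']
    field_simp
    ring
  refine ⟨z, ?_⟩
  calc α * exp (-z ^ 2 / (2 * t)) = exp (log α + -z ^ 2 / (2 * t)) := by rw [exp_add, exp_log hα]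
    _ = exp (log β + -(z - x₀) ^ 2 / (2 * t)) := by rw [hexponents]
    _ = β * exp (-(z - x₀) ^ 2 / (2 * t)) := by rw [exp_add, exp_log hβ]

/-- For the two-point mixture `μ = (α/(α+β)) δ₀ + (β/(α+β)) δ_{x₀}` with `x₀ > 0` there is
`z̄` with `α e^{-z̄²/(2t)} = β e^{-(z̄-x₀)²/(2t)}`, at any such `z̄` one has
`-(log(μ*γ_t))''(z̄) = (1/t)(1 - x₀²/(4t))`, and in particular `μ*γ_t` is not log-concave
when `t < x₀²/4`. -/
theorem two_point_mixture_balanced_point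
    (x₀ : ℝ) (hx₀ : 0 < x₀) (t : ℝ) (ht : 0 < t) (α β : ℝ) (hα : 0 < α) (hβ : 0 < β) :
    (∃ z : ℝ, α * Real.exp (-z ^ 2 / (2 * t)) = β * Real.exp (-(z - x₀) ^ 2 / (2 * t))) ∧
    (∀ z : ℝ, α * Real.exp (-z ^ 2 / (2 * t)) = β * Real.exp (-(z - x₀) ^ 2 / (2 * t)) →
      -(deriv (deriv (fun y => Real.log (twoPointHeat α β x₀ t y))) z)
        = 1 / t * (1 - x₀ ^ 2 / (4 * t))) ∧
    (t < x₀ ^ 2 / 4 →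
      ¬ ∀ z : ℝ, 0 ≤ -(deriv (deriv (fun y => Real.log (twoPointHeat α β x₀ t y))) z)) := by
  obtain ⟨z, hz⟩ := exists_balanced_point hα hβ hx₀.ne' ht.ne'
  refine ⟨⟨z, hz⟩, fun _ => neg_deriv_deriv_log_twoPointHeat_of_balanced hα hβ ht, ?_⟩
  intro hsmall hconcave
  have hz_nonneg := hconcave z
  rw [neg_deriv_deriv_log_twoPointHeat_of_balanced hα hβ ht hz,
    mul_nonneg_iff_of_pos_left (by positivity), sub_nonneg, div_le_one (by positivity)] at hz_nonneg
  linarith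
end
end
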